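/- arXiv:math/0312223 — 4 statements merged into one kernel-verified Lean document; each statement's English description precedes it below -/
import Mathlib

section
/- lim_{k→∞} [ (1/k²) · ∑_{j=1}^{k} log (j−1)! − (1/2) · log k ] = −3/4. -/
/-!
Comparing `log` with its integral gives `j log j - j + 1 - log j ≤ log (j-1)! ≤ j log j - j + 1`.
Comparing the increasing function `x log x - x` with its integral, whose primitive is
`x²/2 log x - 3x²/4`, then sums these bounds to
`∑_{j ≤ k} log (j-1)! = k²/2 log k - 3k²/4 + O(k log k)`,
so the limit is the coefficient `-3/4` of `k²` in that primitive.
-/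

open Filter Real Finset Nat

namespace MonotoneOn

variable {f : ℝ → ℝ} {a b : ℕ}

theorem sum_Icc_le_integral_add (hab : a ≤ b) (hf : MonotoneOn f (Set.Icc a b)) :
    ∑ i ∈ Icc a b, f i ≤ (∫ x in (a : ℝ)..b, f x) + f b := by
  rw [← Ico_add_one_right_eq_Icc, sum_Ico_succ_top (by omega)]
  exact add_le_add_left (hf.sum_le_integral_Ico hab) _

theorem integral_add_le_sum_Icc (hab : a ≤ b) (hf : MonotoneOn f (Set.Icc a b)) :
    (∫ x in (a : ℝ)..b, f x) + f a ≤ ∑ i ∈ Icc a b, f i := by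
  have h := hf.integral_le_sum_Ico hab
  rw [sum_Ico_add' (fun i : ℕ => f i), Ico_add_one_add_one_eq_Ioc] at h
  rw [Icc_eq_cons_Ioc hab, sum_cons, add_comm (f a)]
  exact add_le_add_left h _

end MonotoneOn

namespace Real

theorem log_factorial (n : ℕ) : log (n ! : ℝ) = ∑ i ∈ Icc 1 n, log i := by
  rw [← Ico_add_one_right_eq_Icc, ← prod_Ico_id_eq_factorial, Nat.cast_prod,
    log_prod fun i hi => Nat.cast_ne_zero.2 (by have := (mem_Ico.1 hi).1; omega)]

theorem log_factorial_pred (n : ℕ) : log ((n - 1)! : ℝ) = log (n ! : ℝ) - log n := by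
  cases n with
  | zero => simp
  | succ n =>
    rw [factorial_succ, Nat.cast_mul, log_mul (by positivity) (by positivity)]
    simp

theorem log_factorial_pred_le (n : ℕ) : log ((n - 1)! : ℝ) ≤ n * log n - n + 1 := by
  rcases Nat.eq_zero_or_pos n with rfl | hn
  · simp
  have h := MonotoneOn.sum_Icc_le_integral_add hn <|
    strictMonoOn_log.monotoneOn.mono fun x hx => one_pos.trans_le (by simpa using hx.1)
  rw [integral_log, ← log_factorial] at h
  simp only [Nat.cast_one, log_one] at h
  rw [log_factorial_pred]
  linarith

theorem le_log_factorial_pred {n : ℕ} (hn : 1 ≤ n) :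
    n * log n - n + 1 - log n ≤ log ((n - 1)! : ℝ) := by
  have h := MonotoneOn.integral_add_le_sum_Icc hn <|
    strictMonoOn_log.monotoneOn.mono fun x hx => one_pos.trans_le (by simpa using hx.1)
  rw [integral_log, ← log_factorial] at h
  simp only [Nat.cast_one, log_one] at h
  rw [log_factorial_pred]
  linarith

theorem monotoneOn_mul_log_sub_self : MonotoneOn (fun x : ℝ => x * log x - x) (Set.Ici 1) := by
  intro x hx y _ hxy
  have h : 0 ≤ ∫ u in x..y, log u :=
    intervalIntegral.integral_nonneg hxy fun u hu => log_nonneg (le_trans hx hu.1)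
  rw [integral_log] at h
  simp only
  linarith

theorem integral_mul_log_sub_self {a b : ℝ} (ha : 0 < a) (hb : 0 < b) :
    ∫ x in a..b, (x * log x - x) =
      (b ^ 2 / 2 * log b - 3 / 4 * b ^ 2) - (a ^ 2 / 2 * log a - 3 / 4 * a ^ 2) := by
  refine intervalIntegral.integral_eq_sub_of_hasDerivAt
    (f := fun x => x ^ 2 / 2 * log x - 3 / 4 * x ^ 2) (fun x hx => ?_)
    ((continuous_mul_log.sub continuous_id).intervalIntegrable _ _)
  have hx0 : x ≠ 0 := by
    rcases Set.mem_uIcc.mp hx with h | h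
    · exact (ha.trans_le h.1).ne'
    · exact (hb.trans_le h.1).ne'
  refine ((((hasDerivAt_pow 2 x).div_const 2).fun_mul (hasDerivAt_log hx0)).fun_sub
    ((hasDerivAt_pow 2 x).const_mul (3 / 4))).congr_deriv ?_
  field_simp
  ring

theorem sum_log_factorial_pred_le {k : ℕ} (hk : 1 ≤ k) :
    ∑ j ∈ Icc 1 k, log ((j - 1)! : ℝ) ≤
      k ^ 2 / 2 * log k - 3 / 4 * k ^ 2 + 3 / 4 + k * log k := by
  have hF := MonotoneOn.sum_Icc_le_integral_add hk <|
    monotoneOn_mul_log_sub_self.mono fun x hx => by simpa using hx.1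
  rw [integral_mul_log_sub_self (by norm_num) (by exact_mod_cast hk)] at hF
  simp only [Nat.cast_one, log_one, one_pow] at hF
  calc ∑ j ∈ Icc 1 k, log ((j - 1)! : ℝ)
      ≤ ∑ j ∈ Icc 1 k, ((j * log j - j) + 1 : ℝ) := sum_le_sum fun j _ => log_factorial_pred_le j
    _ = ∑ j ∈ Icc 1 k, (j * log j - j : ℝ) + k := by simp [sum_add_distrib]
    _ ≤ _ := by linarith

theorem le_sum_log_factorial_pred {k : ℕ} (hk : 1 ≤ k) :
    k ^ 2 / 2 * log k - 3 / 4 * k ^ 2 - 1 / 4 + k - k * log k ≤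
      ∑ j ∈ Icc 1 k, log ((j - 1)! : ℝ) := by
  have hF := MonotoneOn.integral_add_le_sum_Icc hk <|
    monotoneOn_mul_log_sub_self.mono fun x hx => by simpa using hx.1
  rw [integral_mul_log_sub_self (by norm_num) (by exact_mod_cast hk)] at hF
  simp only [Nat.cast_one, log_one, one_pow] at hF
  have hfact : log (k ! : ℝ) ≤ k * log k := by
    rw [← log_pow]
    exact log_le_log (by positivity) (by exact_mod_cast factorial_le_pow k)
  calc _ ≤ ∑ j ∈ Icc 1 k, (j * log j - j : ℝ) + k - log (k ! : ℝ) := by linarith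
    _ = ∑ j ∈ Icc 1 k, ((j * log j - j) + 1 - log j : ℝ) := by
        simp [sum_sub_distrib, sum_add_distrib, log_factorial]
    _ ≤ _ := sum_le_sum fun j hj => le_log_factorial_pred (mem_Icc.1 hj).1

theorem abs_sum_log_factorial_pred_sub_le {k : ℕ} (hk : 1 ≤ k) :
    |1 / (k : ℝ) ^ 2 * ∑ j ∈ Icc 1 k, log ((j - 1)! : ℝ) - 1 / 2 * log k + 3 / 4| ≤
      (log k + 1) / k := by
  have hk' : (1 : ℝ) ≤ k := by exact_mod_cast hk
  have hk0 : (k : ℝ) ≠ 0 := by positivity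
  have hlog : 0 ≤ log (k : ℝ) := log_nonneg hk'
  have hupper := sum_log_factorial_pred_le hk
  have hlower := le_sum_log_factorial_pred hk
  have e : 1 / (k : ℝ) ^ 2 * ∑ j ∈ Icc 1 k, log ((j - 1)! : ℝ) - 1 / 2 * log k + 3 / 4 =
      (∑ j ∈ Icc 1 k, log ((j - 1)! : ℝ) - (k ^ 2 / 2 * log k - 3 / 4 * k ^ 2)) / k ^ 2 := by
    field_simp
    ring
  have e' : (log k + 1) / k = (log k + 1) * k / k ^ 2 := by
    field_simp
  rw [e, e', abs_div, abs_sq, div_le_div_iff_of_pos_right (by positivity), abs_le]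
  constructor <;> nlinarith

theorem tendsto_log_add_one_div_natCast :
    Tendsto (fun k : ℕ => (log k + 1) / k) atTop (nhds 0) := by
  simp_rw [add_div]
  simpa using (isLittleO_log_id_atTop.tendsto_div_nhds_zero.comp tendsto_natCast_atTop_atTop).add
    tendsto_one_div_atTop_nhds_zero_nat

end Real

/-- `lim_{k→∞} [ (1/k²) ∑_{j=1}^{k} log (j-1)! - (1/2) log k ] = -3/4`. -/
theorem stmt2 :
    Tendsto (fun k : ℕ =>
        (1 / (k : ℝ) ^ 2) * ∑ j ∈ Finset.Icc 1 k, Real.log ((j - 1)! : ℝ)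
          - (1 / 2) * Real.log k)
      atTop (nhds (-(3 / 4))) := by
  rw [tendsto_iff_norm_sub_tendsto_zero]
  refine squeeze_zero' (Eventually.of_forall fun _ => norm_nonneg _) ?_
    tendsto_log_add_one_div_natCast
  filter_upwards [eventually_ge_atTop 1] with k hk
  simpa [sub_neg_eq_add] using abs_sum_log_factorial_pred_sub_le hk
end

section
/- For every natural number k ≥ 1, ∫_{[0,1]^k} ∏_{1 ≤ i < j ≤ k} (t_i − t_j)² dt_1 ⋯ dt_k = ∏_{j=1}^{k} ( j! · ((j−1)!)² / (k+j−1)! ). -/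
/-!
The integrand is `det (vandermonde t) ^ 2`. Andréief's identity turns the integral of a product
`det [f i (t a)] * det [g i (t a)]` over a product measure into `k! * det [∫ f i * g j]`; with
`f i = g i = x ^ i` on `[0, 1]` this is `k!` times the determinant of the Hilbert matrix
`(i + j + 1)⁻¹`. The Hilbert matrix is the Cauchy matrix `(x i + y j)⁻¹` with `x i = i`,
`y j = j + 1`, and the Cauchy determinant `det V(x) * det V(y) / ∏ (x i + y j)` follows by
induction, because the Schur complement of a Cauchy matrix is a rescaled Cauchy matrix.
-/

open Finset Nat MeasureTheory Matrix Equiv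

theorem prod_filter_lt_sub_sq_eq_det_vandermonde_sq {R : Type*} [CommRing R] {n : ℕ}
    (t : Fin n → R) :
    ∏ p ∈ univ.filter (fun p : Fin n × Fin n => p.1 < p.2), (t p.1 - t p.2) ^ 2 =
      det (vandermonde t) ^ 2 := by
  rw [det_vandermonde, ← prod_pow, prod_filter, Fintype.prod_prod_type]
  refine prod_congr rfl fun i _ => ?_
  rw [← prod_pow, ← prod_filter, filter_lt_eq_Ioi]
  exact prod_congr rfl fun j _ => by ring

theorem det_vandermonde_succ {R : Type*} [CommRing R] {n : ℕ} (v : Fin (n + 1) → R) :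
    det (vandermonde v) =
      (∏ i : Fin n, (v i.succ - v 0)) * det (vandermonde (v ∘ Fin.succ)) := by
  simp only [det_vandermonde, Fin.prod_univ_succ, Fin.prod_Ioi_zero, Fin.prod_Ioi_succ,
    Function.comp_apply]

theorem det_vandermonde_natCast {R : Type*} [CommRing R] (n : ℕ) :
    det (vandermonde fun i : Fin n => ((i : ℕ) : R)) = ∏ m ∈ range n, (m ! : R) := by
  cases n with
  | zero => simp
  | succ n =>
    rw [← Nat.cast_prod, prod_range_succ_factorial]
    exact det_vandermonde_id_eq_superFactorial n

theorem det_succ_eq_mul_det_schur {K : Type*} [Field K] {n : ℕ}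
    (A : Matrix (Fin (n + 1)) (Fin (n + 1)) K) (h : A 0 0 ≠ 0) :
    det A = A 0 0 *
      det (of fun i j : Fin n => A i.succ j.succ - A i.succ 0 / A 0 0 * A 0 j.succ) := by
  set c : Fin (n + 1) → K := Fin.cons 0 fun i => A i.succ 0 / A 0 0
  have hrow : det A = det (of fun i j => A i j - c i * A 0 j) :=
    det_eq_of_forall_row_eq_smul_add_const c 0 rfl fun i j => by simp [c]
  rw [hrow, det_succ_column_zero, Fin.sum_univ_succ]
  simp [c, h, submatrix]

theorem det_of_mul_mul {R n : Type*} [CommRing R] [Fintype n] [DecidableEq n] (a b : n → R)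
    (c : n → n → R) :
    det (of fun i j => a i * b j * c i j) = (∏ i, a i) * (∏ j, b j) * det (of c) := by
  rw [show of (fun i j => a i * b j * c i j) = diagonal a * of c * diagonal b by
    ext; simp [mul_right_comm], det_mul, det_mul, det_diagonal, det_diagonal]
  ring

theorem det_cauchy {K : Type*} [Field K] {n : ℕ} (x y : Fin n → K)
    (h : ∀ i j, x i + y j ≠ 0) :
    det (of fun i j => (x i + y j)⁻¹) =
      det (vandermonde x) * det (vandermonde y) / ∏ i, ∏ j, (x i + y j) := by
  induction n with
  | zero => simp
  | succ n ih =>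
    have schur : ∀ i j : Fin n, (x i.succ + y j.succ)⁻¹ -
        (x i.succ + y 0)⁻¹ / (x 0 + y 0)⁻¹ * (x 0 + y j.succ)⁻¹ =
          (x i.succ - x 0) / (x i.succ + y 0) * ((y j.succ - y 0) / (x 0 + y j.succ)) *
            (x i.succ + y j.succ)⁻¹ := by
      intro i j
      have := h i.succ j.succ
      have := h i.succ 0
      have := h 0 j.succ
      have := h 0 0
      field_simp
      ring
    rw [det_succ_eq_mul_det_schur _ (inv_ne_zero (h 0 0))]
    simp only [of_apply, schur]
    rw [det_of_mul_mul, ih _ _ fun i j => h i.succ j.succ,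
      det_vandermonde_succ x, det_vandermonde_succ y]
    simp only [Fin.prod_univ_succ, prod_mul_distrib, prod_inv_distrib, Function.comp_def,
      div_eq_mul_inv, mul_inv]
    ring

theorem prod_natCast_add_add_one {K : Type*} [Field K] [CharZero K] (n m : ℕ) :
    ∏ j : Fin n, ((m : K) + ((j : ℕ) + 1)) = (m + n)! / m ! := by
  rw [eq_div_iff (by exact_mod_cast factorial_ne_zero m), ← factorial_mul_ascFactorial,
    ascFactorial_eq_prod_range, ← Fin.prod_univ_eq_prod_range]
  push_cast
  exact (mul_comm _ _).trans (congrArg _ (prod_congr rfl fun j _ => by ring))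

theorem det_hilbert {K : Type*} [Field K] [CharZero K] (n : ℕ) :
    det (of fun i j : Fin n => ((i : ℕ) + (j : ℕ) + 1 : K)⁻¹) =
      ∏ m ∈ range n, (m ! : K) ^ 3 / (n + m)! := by
  have hne : ∀ i j : Fin n, ((i : ℕ) : K) + ((j : ℕ) + 1) ≠ 0 := fun i j => by
    exact_mod_cast Nat.succ_ne_zero (i + j)
  simp_rw [add_assoc]
  rw [det_cauchy _ _ hne, det_vandermonde_add, det_vandermonde_natCast]
  simp_rw [prod_natCast_add_add_one]
  rw [Fin.prod_univ_eq_prod_range (fun m => ((m + n)! / m ! : K)), ← sq, ← prod_pow,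
    ← prod_div_distrib]
  exact prod_congr rfl fun m _ => by rw [div_div_eq_mul_div, add_comm m]; ring

theorem sum_sign_mul_prod_apply_perm {R ι : Type*} [CommRing R] [Fintype ι] [DecidableEq ι]
    (G : Matrix ι ι R) (τ : Perm ι) :
    ∑ σ : Perm ι, ((Perm.sign σ : ℤ) : R) * (Perm.sign τ : ℤ) * ∏ a, G (σ a) (τ a) =
      det G := by
  have hτ : ((Perm.sign τ : ℤ) : R) * (Perm.sign τ : ℤ) = 1 := by
    rw [← Int.cast_mul, ← Units.val_mul, Int.units_mul_self, Units.val_one, Int.cast_one]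
  have hpermute := det_permute' τ G
  rw [det_apply'] at hpermute
  simp only [submatrix_apply, id_eq] at hpermute
  calc _ = (∑ σ : Perm ι, ((Perm.sign σ : ℤ) : R) * ∏ a, G (σ a) (τ a)) *
        (Perm.sign τ : ℤ) := by
        rw [sum_mul]
        exact sum_congr rfl fun σ _ => by ring
    _ = det G := by rw [hpermute]; linear_combination det G * hτ

theorem integral_det_mul_det {𝕜 α ι : Type*} [RCLike 𝕜] [MeasurableSpace α] [Fintype ι]
    [DecidableEq ι] (μ : Measure α) [SigmaFinite μ] (f g : ι → α → 𝕜)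
    (hfg : ∀ i j, Integrable (fun x => f i x * g j x) μ) :
    ∫ t, det (of fun a i => f i (t a)) * det (of fun a i => g i (t a))
        ∂(Measure.pi fun _ => μ) =
      ((Fintype.card ι)! : 𝕜) * det (of fun i j => ∫ x, f i x * g j x ∂μ) := by
  have hexpand : ∀ t : ι → α,
      det (of fun a i => f i (t a)) * det (of fun a i => g i (t a)) =
        ∑ τ : Perm ι, ∑ σ : Perm ι, ((Perm.sign σ : ℤ) : 𝕜) * (Perm.sign τ : ℤ) *
          ∏ a, (f (σ a) (t a) * g (τ a) (t a)) := by
    intro t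
    rw [← det_transpose, ← det_transpose (of fun a i => g i (t a)), det_apply', det_apply',
      sum_mul_sum, sum_comm]
    refine sum_congr rfl fun τ _ => sum_congr rfl fun σ _ => ?_
    simp only [transpose_apply, of_apply, prod_mul_distrib]
    ring
  have hint : ∀ σ τ : Perm ι,
      Integrable (fun t : ι → α => ∏ a, (f (σ a) (t a) * g (τ a) (t a)))
        (Measure.pi fun _ => μ) :=
    fun σ τ => Integrable.fintype_prod fun a => hfg (σ a) (τ a)
  simp_rw [hexpand]
  rw [integral_finsetSum _ fun τ _ => integrable_finsetSum _ fun σ _ => (hint σ τ).const_mul _]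
  calc _ = ∑ τ : Perm ι, det (of fun i j => ∫ x, f i x * g j x ∂μ) := by
        refine sum_congr rfl fun τ _ => ?_
        rw [integral_finsetSum _ fun σ _ => (hint σ τ).const_mul _,
          ← sum_sign_mul_prod_apply_perm _ τ]
        refine sum_congr rfl fun σ _ => ?_
        rw [integral_const_mul,
          integral_fintype_prod_eq_prod fun a x => f (σ a) x * g (τ a) x]
        rfl
    _ = _ := by rw [sum_const, Finset.card_univ, Fintype.card_perm, nsmul_eq_mul]

theorem integral_Icc_pow_mul_pow (i j : ℕ) :
    ∫ x in Set.Icc (0 : ℝ) 1, x ^ i * x ^ j = ((i : ℝ) + j + 1)⁻¹ := by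
  simp_rw [← pow_add]
  rw [integral_Icc_eq_integral_Ioc, ← intervalIntegral.integral_of_le zero_le_one,
    integral_pow]
  push_cast
  simp

theorem stmt3_general (k : ℕ) :
    (∫ t in Set.univ.pi (fun _ : Fin k => Set.Icc (0 : ℝ) 1),
        ∏ p ∈ Finset.univ.filter (fun p : Fin k × Fin k => p.1 < p.2),
          (t p.1 - t p.2) ^ 2)
      = ∏ j ∈ Finset.Icc 1 k, ((j ! : ℝ) * ((j - 1)! : ℝ) ^ 2 / ((k + j - 1)! : ℝ)) := by
  have hmonomial : ∀ i j : Fin k,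
      Integrable (fun x : ℝ => x ^ (i : ℕ) * x ^ (j : ℕ)) (volume.restrict (Set.Icc 0 1)) :=
    fun i j =>
      (by fun_prop : Continuous fun x : ℝ => x ^ (i : ℕ) * x ^ (j : ℕ)).integrableOn_Icc
  calc _ = ∫ t, det (vandermonde t) * det (vandermonde t)
        ∂(Measure.pi fun _ : Fin k => volume.restrict (Set.Icc (0 : ℝ) 1)) := by
        rw [volume_pi, Measure.restrict_pi_pi]
        simp_rw [prod_filter_lt_sub_sq_eq_det_vandermonde_sq, sq]
    _ = k ! * det (of fun i j : Fin k => ((i : ℕ) + (j : ℕ) + 1 : ℝ)⁻¹) := by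
        have := integral_det_mul_det _ (fun (i : Fin k) (x : ℝ) => x ^ (i : ℕ)) _ hmonomial
        simp only [integral_Icc_pow_mul_pow, Fintype.card_fin] at this
        exact this
    _ = (k ! : ℝ) * ∏ m ∈ range k, (m ! : ℝ) ^ 3 / (k + m)! := by rw [det_hilbert]
    _ = _ := by
        rw [← Ico_add_one_right_eq_Icc, ← prod_Ico_add' _ 0 k 1, ← range_eq_Ico,
          ← prod_range_add_one_eq_factorial, Nat.cast_prod, ← prod_mul_distrib]
        refine prod_congr rfl fun m _ => ?_
        rw [Nat.add_sub_cancel, ← add_assoc, Nat.add_sub_cancel, factorial_succ]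
        push_cast
        ring

/-- Selberg's integral (case α = β = γ = 1): for `k ≥ 1`,
`∫_{[0,1]^k} ∏_{i<j} (t_i - t_j)² dt = ∏_{j=1}^{k} j! ((j-1)!)² / (k+j-1)!`. -/
theorem stmt3 (k : ℕ) (hk : 1 ≤ k) :
    (∫ t in Set.univ.pi (fun _ : Fin k => Set.Icc (0 : ℝ) 1),
        ∏ p ∈ Finset.univ.filter (fun p : Fin k × Fin k => p.1 < p.2),
          (t p.1 - t p.2) ^ 2)
      = ∏ j ∈ Finset.Icc 1 k, ((j ! : ℝ) * ((j - 1)! : ℝ) ^ 2 / ((k + j - 1)! : ℝ)) :=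
  stmt3_general k
end

section
/- Let k ≥ 1 and let A, B be Hermitian k × k complex matrices. Let λ₁(A) ≤ ⋯ ≤ λ_k(A) and λ₁(B) ≤ ⋯ ≤ λ_k(B) be their eigenvalues listed in nondecreasing order with multiplicity. Then the minimum over all unitary k × k matrices u of the Frobenius norm ‖uAu* − B‖_F equals ( ∑_{i=1}^{k} (λ_i(A) − λ_i(B))² )^{1/2}. In particular, for every ε ≥ 0 there exists a unitary u with ‖uAu* − B‖_F ≤ ε if and only if ( ∑_{i=1}^{k} (λ_i(A) − λ_i(B))² )^{1/2} ≤ ε. -/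
/-!
Diagonalize `A = V Dₐ V*` and `B = W D_b W*` with the eigenvalues in nondecreasing order. The
Frobenius norm is unitarily invariant, so for `U = W* u V`
`‖u A u* - B‖² = ‖U Dₐ U* - D_b‖² = ∑ aᵢ² + ∑ bᵢ² - 2 ∑ᵢⱼ |Uᵢⱼ|² bᵢ aⱼ`.
The matrix `(|Uᵢⱼ|²)` is doubly stochastic, hence by Birkhoff a convex combination of permutation
matrices, and on each of them the rearrangement inequality bounds the cross term by `∑ bᵢ aᵢ`.
Equality holds for `U = 1`, i.e. `u = W V*`.
-/

open Finset Polynomial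

theorem Monotone.eq_of_map_univ_val_eq {α : Type*} [LinearOrder α] {k : ℕ} {c d : Fin k → α}
    (hc : Monotone c) (hd : Monotone d) (h : univ.val.map c = univ.val.map d) : c = d := by
  rw [Fin.univ_val_map, Fin.univ_val_map, Multiset.coe_eq_coe] at h
  exact List.ofFn_injective <| h.eq_of_sortedLE (List.sortedLE_ofFn_iff.mpr hc)
    (List.sortedLE_ofFn_iff.mpr hd)

namespace Matrix

variable {𝕜 n : Type*} [RCLike 𝕜] [Fintype n]

theorem trace_conjTranspose_mul_self_eq_sum_norm_sq {m : Type*} [Fintype m] (M : Matrix m n 𝕜) :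
    (Mᴴ * M).trace = ((∑ i, ∑ j, ‖M i j‖ ^ 2 : ℝ) : 𝕜) := by
  rw [sum_comm]
  simp [trace, mul_apply, RCLike.conj_mul]

variable [DecidableEq n]

theorem sum_norm_sq_diagonal (d : n → 𝕜) :
    ∑ i, ∑ j, ‖diagonal d i j‖ ^ 2 = ∑ i, ‖d i‖ ^ 2 := by
  simp [diagonal_apply, apply_ite]

theorem sum_norm_sq_unitary_mul_mul_star {U : Matrix n n 𝕜} (hU : U ∈ unitaryGroup n 𝕜)
    (M : Matrix n n 𝕜) :
    ∑ i, ∑ j, ‖(U * M * star U) i j‖ ^ 2 = ∑ i, ∑ j, ‖M i j‖ ^ 2 := by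
  have hconj : (U * M * star U)ᴴ * (U * M * star U) = U * (Mᴴ * M) * star U :=
    calc (U * M * star U)ᴴ * (U * M * star U) = U * Mᴴ * (star U * U) * M * star U := by
          simp only [← star_eq_conjTranspose, star_mul, star_star, mul_assoc]
      _ = U * (Mᴴ * M) * star U := by
          rw [mem_unitaryGroup_iff'.mp hU, mul_one, mul_assoc U]
  apply RCLike.ofReal_injective (K := 𝕜)
  rw [← trace_conjTranspose_mul_self_eq_sum_norm_sq, ← trace_conjTranspose_mul_self_eq_sum_norm_sq,
    hconj, trace_mul_cycle, mem_unitaryGroup_iff'.mp hU, one_mul]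

theorem sum_norm_sq_sub_unitary_conj {W : Matrix n n 𝕜} (hW : W ∈ unitaryGroup n 𝕜)
    (X E : Matrix n n 𝕜) :
    ∑ i, ∑ j, ‖(X - W * E * star W) i j‖ ^ 2 = ∑ i, ∑ j, ‖(star W * X * W - E) i j‖ ^ 2 := by
  have hWW : W * star W = 1 := mem_unitaryGroup_iff.mp hW
  have hconj : X - W * E * star W = W * (star W * X * W - E) * star W := by
    simp only [mul_sub, sub_mul, ← mul_assoc, hWW, one_mul]
    simp only [mul_assoc, hWW, mul_one]
  rw [hconj, sum_norm_sq_unitary_mul_mul_star hW]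

theorem sum_norm_sq_sub_diagonal (M : Matrix n n 𝕜) (b : n → ℝ) :
    ∑ i, ∑ j, ‖(M - diagonal fun i ↦ (b i : 𝕜)) i j‖ ^ 2 =
      ∑ i, ∑ j, ‖M i j‖ ^ 2 - 2 * ∑ i, b i * RCLike.re (M i i) + ∑ i, b i ^ 2 := by
  have hentry : ∀ i j, ‖(M - diagonal fun i ↦ (b i : 𝕜)) i j‖ ^ 2 =
      ‖M i j‖ ^ 2 - if i = j then 2 * b i * RCLike.re (M i i) - b i ^ 2 else 0 := by
    intro i j
    by_cases hij : i = j
    · subst hij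
      simp only [sub_apply, diagonal_apply_eq, RCLike.norm_sq_eq_def, map_sub, RCLike.ofReal_re,
        RCLike.ofReal_im, sub_zero, if_true]
      ring
    · simp [hij]
  simp only [hentry, sum_sub_distrib, sum_ite_eq, mem_univ, if_true, mul_sum,
    mul_assoc]
  ring

theorem mul_diagonal_mul_star_apply_self (U : Matrix n n 𝕜) (a : n → ℝ) (i : n) :
    (U * diagonal (fun j ↦ (a j : 𝕜)) * star U) i i = ((∑ j, ‖U i j‖ ^ 2 * a j : ℝ) : 𝕜) := by
  simp [mul_apply, diagonal_apply, RCLike.mul_conj, mul_right_comm _ _ (starRingEnd 𝕜 _)]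

theorem sum_norm_sq_conj_diagonal_sub_diagonal {U : Matrix n n 𝕜} (hU : U ∈ unitaryGroup n 𝕜)
    (a b : n → ℝ) :
    ∑ i, ∑ j, ‖(U * diagonal (fun i ↦ (a i : 𝕜)) * star U - diagonal fun i ↦ (b i : 𝕜)) i j‖ ^ 2 =
      ∑ i, a i ^ 2 + ∑ i, b i ^ 2 - 2 * b ⬝ᵥ (of (fun i j ↦ ‖U i j‖ ^ 2) *ᵥ a) := by
  rw [sum_norm_sq_sub_diagonal, sum_norm_sq_unitary_mul_mul_star hU, sum_norm_sq_diagonal]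
  simp only [mul_diagonal_mul_star_apply_self, RCLike.ofReal_re, RCLike.norm_ofReal, sq_abs,
    dotProduct, mulVec, of_apply]
  ring

theorem of_norm_sq_mem_doublyStochastic {U : Matrix n n 𝕜} (hU : U ∈ unitaryGroup n 𝕜) :
    of (fun i j ↦ ‖U i j‖ ^ 2) ∈ doublyStochastic ℝ n := by
  refine mem_doublyStochastic_iff_sum.mpr ⟨fun i j ↦ sq_nonneg _, fun i ↦ ?_, fun j ↦ ?_⟩
  · apply RCLike.ofReal_injective (K := 𝕜)
    have h := congr_fun₂ (mem_unitaryGroup_iff.mp hU) i i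
    simpa [mul_apply, RCLike.mul_conj] using h
  · apply RCLike.ofReal_injective (K := 𝕜)
    have h := congr_fun₂ (mem_unitaryGroup_iff'.mp hU) j j
    simpa [mul_apply, RCLike.conj_mul] using h

theorem dotProduct_mulVec_le_of_mem_doublyStochastic {a b : n → ℝ} (hba : Monovary b a)
    {S : Matrix n n ℝ} (hS : S ∈ doublyStochastic ℝ n) :
    b ⬝ᵥ (S *ᵥ a) ≤ b ⬝ᵥ a := by
  rw [← SetLike.mem_coe, doublyStochastic_eq_convexHull_permMatrix] at hS
  refine convexHull_min ?_
    (convex_halfSpace_le (f := fun S : Matrix n n ℝ ↦ b ⬝ᵥ (S *ᵥ a)) ?_ _) hS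
  · rintro _ ⟨σ, rfl⟩
    simpa [permMatrix_mulVec, dotProduct] using hba.sum_mul_comp_perm_le_sum_mul
  · constructor <;> intros <;> simp [Matrix.add_mulVec, Matrix.smul_mulVec, dotProduct_add]

theorem sum_sq_sub_le_sum_norm_sq_conj_diagonal_sub_diagonal {U : Matrix n n 𝕜}
    (hU : U ∈ unitaryGroup n 𝕜) {a b : n → ℝ} (hba : Monovary b a) :
    ∑ i, (a i - b i) ^ 2 ≤
      ∑ i, ∑ j,
        ‖(U * diagonal (fun i ↦ (a i : 𝕜)) * star U - diagonal fun i ↦ (b i : 𝕜)) i j‖ ^ 2 := by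
  have hexpand : ∑ i, (a i - b i) ^ 2 = ∑ i, a i ^ 2 + ∑ i, b i ^ 2 - 2 * b ⬝ᵥ a := by
    simp only [dotProduct, mul_sum, ← sum_add_distrib, ← sum_sub_distrib]
    exact sum_congr rfl fun i _ ↦ by ring
  rw [hexpand, sum_norm_sq_conj_diagonal_sub_diagonal hU]
  linarith [dotProduct_mulVec_le_of_mem_doublyStochastic hba (of_norm_sq_mem_doublyStochastic hU)]
theorem IsHermitian.exists_unitary_eq_conj_diagonal {k : ℕ} {A : Matrix (Fin k) (Fin k) 𝕜}
    (hA : A.IsHermitian) {l : Fin k → ℝ} (hl : Monotone l)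
    (hchar : A.charpoly = ∏ i, (X - C (l i : 𝕜))) :
    ∃ V ∈ unitaryGroup (Fin k) 𝕜, A = V * diagonal (fun i ↦ (l i : 𝕜)) * star V := by
  set σ := Tuple.sort hA.eigenvalues
  have hsorted : hA.eigenvalues ∘ σ = l := by
    refine (Tuple.monotone_sort _).eq_of_map_univ_val_eq hl ?_
    apply Multiset.map_injective (RCLike.ofReal_injective (K := 𝕜))
    rw [Multiset.map_map, Multiset.map_map, ← Function.comp_assoc, ← Multiset.map_map _ σ,
      Multiset.map_univ_val_equiv, ← hA.roots_charpoly_eq_eigenvalues, hchar,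
      roots_prod _ _ (prod_ne_zero_iff.mpr fun i _ ↦ X_sub_C_ne_zero _)]
    simp
  set V₀ : Matrix (Fin k) (Fin k) 𝕜 := ↑hA.eigenvectorUnitary
  have hV₀ : V₀ * star V₀ = 1 := mem_unitaryGroup_iff.mp hA.eigenvectorUnitary.2
  have hA₀ : A = V₀ * diagonal (RCLike.ofReal ∘ hA.eigenvalues) * star V₀ :=
    hA.spectral_theorem.trans (Unitary.conjStarAlgAut_apply _ _)
  have hdiag : diagonal (fun i ↦ (l i : 𝕜)) =
      (diagonal (RCLike.ofReal ∘ hA.eigenvalues)).submatrix σ σ := by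
    rw [submatrix_diagonal_equiv, ← hsorted]
    rfl
  refine ⟨V₀.submatrix id σ, ?_, ?_⟩
  · rw [mem_unitaryGroup_iff, star_eq_conjTranspose, conjTranspose_submatrix,
      submatrix_mul_equiv, ← star_eq_conjTranspose, hV₀, submatrix_id_id]
  · rw [hdiag, star_eq_conjTranspose, conjTranspose_submatrix, submatrix_mul_equiv,
      submatrix_mul_equiv, submatrix_id_id, ← star_eq_conjTranspose]
    exact hA₀

theorem IsHermitian.isLeast_sum_norm_sq_unitary_conj_sub {k : ℕ}
    {A B : Matrix (Fin k) (Fin k) 𝕜}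
    (hA : A.IsHermitian) (hB : B.IsHermitian) {lA lB : Fin k → ℝ} (hlA : Monotone lA)
    (hlB : Monotone lB) (hAchar : A.charpoly = ∏ i, (X - C (lA i : 𝕜)))
    (hBchar : B.charpoly = ∏ i, (X - C (lB i : 𝕜))) :
    IsLeast {r | ∃ u ∈ unitaryGroup (Fin k) 𝕜, r = ∑ i, ∑ j, ‖(u * A * star u - B) i j‖ ^ 2}
      (∑ i, (lA i - lB i) ^ 2) := by
  obtain ⟨V, hV, rfl⟩ := hA.exists_unitary_eq_conj_diagonal hlA hAchar
  obtain ⟨W, hW, rfl⟩ := hB.exists_unitary_eq_conj_diagonal hlB hBchar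
  have hreduce : ∀ u : Matrix (Fin k) (Fin k) 𝕜,
      ∑ i, ∑ j, ‖(u * (V * diagonal (fun i ↦ (lA i : 𝕜)) * star V) * star u -
        W * diagonal (fun i ↦ (lB i : 𝕜)) * star W) i j‖ ^ 2 =
      ∑ i, ∑ j, ‖(star W * u * V * diagonal (fun i ↦ (lA i : 𝕜)) * star (star W * u * V) -
        diagonal fun i ↦ (lB i : 𝕜)) i j‖ ^ 2 := fun u ↦ by
    rw [sum_norm_sq_sub_unitary_conj hW]
    simp only [star_mul, star_star, mul_assoc]
  have hopt : star W * (W * star V) * V = 1 := by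
    rw [← mul_assoc (star W), mem_unitaryGroup_iff'.mp hW, one_mul, mem_unitaryGroup_iff'.mp hV]
  refine ⟨⟨W * star V, mul_mem hW (Unitary.star_mem hV), ?_⟩, ?_⟩
  · rw [hreduce, hopt, one_mul, star_one, mul_one, diagonal_sub, sum_norm_sq_diagonal]
    simp only [← RCLike.ofReal_sub, RCLike.norm_ofReal, sq_abs]
  · rintro _ ⟨u, hu, rfl⟩
    rw [hreduce]
    exact sum_sq_sub_le_sum_norm_sq_conj_diagonal_sub_diagonal
      (mul_mem (mul_mem (Unitary.star_mem hW) hu) hV) (hlB.monovary hlA)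

end Matrix

theorem stmt9_general (k : ℕ) (A B : Matrix (Fin k) (Fin k) ℂ)
    (hA : A.IsHermitian) (hB : B.IsHermitian)
    (lA lB : Fin k → ℝ) (hlA : Monotone lA) (hlB : Monotone lB)
    (hAchar : A.charpoly = ∏ i, (X - C (lA i : ℂ)))
    (hBchar : B.charpoly = ∏ i, (X - C (lB i : ℂ)))
    (frob : Matrix (Fin k) (Fin k) ℂ → ℝ)
    (hfrob : ∀ C : Matrix (Fin k) (Fin k) ℂ,
      frob C = Real.sqrt (∑ i, ∑ j, ‖C i j‖ ^ 2)) :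
    IsLeast
      {r : ℝ | ∃ u : Matrix (Fin k) (Fin k) ℂ, u ∈ Matrix.unitaryGroup (Fin k) ℂ ∧
        r = frob (u * A * star u - B)}
      (Real.sqrt (∑ i, (lA i - lB i) ^ 2)) ∧
    ∀ ε : ℝ, 0 ≤ ε →
      ((∃ u ∈ Matrix.unitaryGroup (Fin k) ℂ, frob (u * A * star u - B) ≤ ε) ↔
        Real.sqrt (∑ i, (lA i - lB i) ^ 2) ≤ ε) := by
  obtain ⟨⟨u₀, hu₀, hmin⟩, hlower⟩ :=
    hA.isLeast_sum_norm_sq_unitary_conj_sub hB hlA hlB hAchar hBchar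
  have hfrob_lower : ∀ u ∈ Matrix.unitaryGroup (Fin k) ℂ,
      Real.sqrt (∑ i, (lA i - lB i) ^ 2) ≤ frob (u * A * star u - B) := fun u hu ↦ by
    rw [hfrob]
    exact Real.sqrt_le_sqrt (hlower ⟨u, hu, rfl⟩)
  have hfrob_min : frob (u₀ * A * star u₀ - B) = Real.sqrt (∑ i, (lA i - lB i) ^ 2) := by
    rw [hfrob, hmin]
  refine ⟨⟨⟨u₀, hu₀, hfrob_min.symm⟩, fun r ⟨u, hu, hr⟩ ↦ hr ▸ hfrob_lower u hu⟩, fun ε _ ↦ ?_⟩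
  exact ⟨fun ⟨u, hu, hε⟩ ↦ (hfrob_lower u hu).trans hε, fun hε ↦ ⟨u₀, hu₀, hfrob_min ▸ hε⟩⟩

/-- For Hermitian `k × k` matrices `A, B` with eigenvalues `λA, λB` listed in
nondecreasing order with multiplicity (encoded via the characteristic polynomials),
the minimum over unitaries `u` of the Frobenius norm `‖uAu* - B‖_F` equals
`(∑ i (λA i - λB i)²)^{1/2}`; in particular for every `ε ≥ 0` a unitary `u` with
`‖uAu* - B‖_F ≤ ε` exists iff `(∑ i (λA i - λB i)²)^{1/2} ≤ ε`. -/
theorem stmt9 (k : ℕ) (hk : 1 ≤ k) (A B : Matrix (Fin k) (Fin k) ℂ)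
    (hA : A.IsHermitian) (hB : B.IsHermitian)
    (lA lB : Fin k → ℝ) (hlA : Monotone lA) (hlB : Monotone lB)
    (hAchar : A.charpoly = ∏ i, (X - C (lA i : ℂ)))
    (hBchar : B.charpoly = ∏ i, (X - C (lB i : ℂ)))
    (frob : Matrix (Fin k) (Fin k) ℂ → ℝ)
    (hfrob : ∀ C : Matrix (Fin k) (Fin k) ℂ,
      frob C = Real.sqrt (∑ i, ∑ j, ‖C i j‖ ^ 2)) :
    IsLeast
      {r : ℝ | ∃ u : Matrix (Fin k) (Fin k) ℂ, u ∈ Matrix.unitaryGroup (Fin k) ℂ ∧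
        r = frob (u * A * star u - B)}
      (Real.sqrt (∑ i, (lA i - lB i) ^ 2)) ∧
    ∀ ε : ℝ, 0 ≤ ε →
      ((∃ u ∈ Matrix.unitaryGroup (Fin k) ℂ, frob (u * A * star u - B) ≤ ε) ↔
        Real.sqrt (∑ i, (lA i - lB i) ^ 2) ≤ ε) :=
  stmt9_general k A B hA hB lA lB hlA hlB hAchar hBchar frob hfrob
end

section
/- The family of real numbers ( 2^{−(i+j)} · | log | 1/i − 1/j | | ) indexed by pairs of positive integers (i,j) with i ≠ j is summable; in particular −∞ < ∑_{i ≠ j} 2^{−(i+j)} · log | 1/i − 1/j | < ∞. -/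
/-!
For distinct positive integers `i, j` the distance `|1/i - 1/j| = |j - i| / (i j)` lies in
`[1 / (i j), 1]`, so `|log |1/i - 1/j|| ≤ log (i j) ≤ i j`. The family is therefore dominated by
`(i / 2^i) (j / 2^j)`, a product of two summable sequences.
-/

open Real

lemma abs_one_div_sub_one_div_le_one {a b : ℝ} (ha : 1 ≤ a) (hb : 1 ≤ b) :
    |1 / a - 1 / b| ≤ 1 :=
  abs_sub_le_of_nonneg_of_le (by positivity) (div_le_one_of_le₀ ha (by positivity))
    (by positivity) (div_le_one_of_le₀ hb (by positivity))

lemma one_div_mul_le_abs_one_div_sub_one_div {i j : ℕ} (hi : 0 < i) (hj : 0 < j) (hij : i ≠ j) :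
    1 / ((i : ℝ) * j) ≤ |1 / (i : ℝ) - 1 / j| := by
  have hdist : (1 : ℝ) ≤ |(j : ℝ) - i| := by
    have : (1 : ℤ) ≤ |(j : ℤ) - i| := Int.one_le_abs (sub_ne_zero.mpr (by exact_mod_cast hij.symm))
    exact_mod_cast this
  have hi' : (i : ℝ) ≠ 0 := by positivity
  have hj' : (j : ℝ) ≠ 0 := by positivity
  rw [div_sub_div _ _ hi' hj', abs_div, abs_of_pos (by positivity : (0 : ℝ) < i * j),
    one_mul, mul_one]
  exact div_le_div_of_nonneg_right hdist (by positivity)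

lemma Real.abs_log_le_log_of_inv_le {x y : ℝ} (hy : 0 < y) (hyx : y⁻¹ ≤ x) (hx : x ≤ 1) :
    |log x| ≤ log y := by
  have hx0 : 0 < x := (inv_pos.mpr hy).trans_le hyx
  rw [abs_of_nonpos (log_nonpos hx0.le hx), ← log_inv]
  exact log_le_log (inv_pos.mpr hx0) (inv_le_of_inv_le₀ hy hyx)

lemma abs_log_abs_one_div_sub_one_div_le_mul {i j : ℕ} (hi : 0 < i) (hj : 0 < j) (hij : i ≠ j) :
    |log (|1 / (i : ℝ) - 1 / j|)| ≤ i * j := by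
  have hij_pos : (0 : ℝ) < i * j := by positivity
  calc |log (|1 / (i : ℝ) - 1 / j|)| ≤ log ((i : ℝ) * j) :=
        abs_log_le_log_of_inv_le hij_pos
          (by simpa only [one_div] using one_div_mul_le_abs_one_div_sub_one_div hi hj hij)
          (abs_one_div_sub_one_div_le_one (by exact_mod_cast hi) (by exact_mod_cast hj))
    _ ≤ i * j := log_le_self hij_pos.le

lemma summable_one_div_two_pow_add_mul :
    Summable fun p : ℕ × ℕ => (1 / 2 ^ (p.1 + p.2) : ℝ) * (p.1 * p.2) := by
  have h : Summable fun n : ℕ => (n : ℝ) * (1 / 2) ^ n := by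
    simpa using summable_pow_mul_geometric_of_norm_lt_one (R := ℝ) 1
      (by norm_num : ‖(1 / 2 : ℝ)‖ < 1)
  refine (h.mul_of_nonneg h (fun _ => by positivity) (fun _ => by positivity)).congr fun p => ?_
  simp only [one_div, inv_pow, pow_add, mul_inv]
  ring

/-- The family `2^{-(i+j)} |log|1/i - 1/j||`, indexed by pairs of positive integers
`(i,j)` with `i ≠ j`, is summable; in particular the off-diagonal logarithmic energy
`∑_{i≠j} 2^{-(i+j)} log|1/i - 1/j|` is finite. -/
theorem stmt13 :
    Summable (fun p : {p : ℕ × ℕ // 0 < p.1 ∧ 0 < p.2 ∧ p.1 ≠ p.2} =>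
      (1 / 2 ^ (p.val.1 + p.val.2) : ℝ) *
        |Real.log (abs (1 / (p.val.1 : ℝ) - 1 / (p.val.2 : ℝ)))|) := by
  refine (summable_one_div_two_pow_add_mul.subtype _).of_nonneg_of_le
    (fun _ => by positivity) ?_
  rintro ⟨p, hp1, hp2, hp12⟩
  exact mul_le_mul_of_nonneg_left (abs_log_abs_one_div_sub_one_div_le_mul hp1 hp2 hp12)
    (by positivity)
end
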